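/- arXiv:2605.14608 — 4 statements merged into one kernel-verified Lean document; each statement's English description precedes it below -/
import Mathlib

section
/- Let T₁ and T₂ be tensors of identical dimensions, with T₂ having no zero entries and T₂⁻¹ its elementwise inverse. Then rank_ε(T₁ ⊙ T₂⁻¹) ≥ rank_η(T₁) / rank_ε(T₂), where η = (max|T₁ ⊙ T₂⁻¹| + max|T₂|)·ε + ε². -/
/-- A CP (canonical polyadic) tensor of rank `R` built from factor matrices. -/
def cpTensor {ι₁ ι₂ ι₃ ι₄ : Type*} (R : ℕ)
    (A : ι₁ → Fin R → ℝ) (B : ι₂ → Fin R → ℝ) (C : ι₃ → Fin R → ℝ) (D : ι₄ → Fin R → ℝ) :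
    ι₁ → ι₂ → ι₃ → ι₄ → ℝ :=
  fun μ ν σ lam => ∑ r, A μ r * B ν r * C σ r * D lam r

/-- The Frobenius norm of a four-index tensor. -/
noncomputable def frob {ι₁ ι₂ ι₃ ι₄ : Type*} [Fintype ι₁] [Fintype ι₂] [Fintype ι₃] [Fintype ι₄]
    (T : ι₁ → ι₂ → ι₃ → ι₄ → ℝ) : ℝ :=
  Real.sqrt (∑ μ, ∑ ν, ∑ σ, ∑ lam, (T μ ν σ lam) ^ 2)

/-- The ε-effective CP rank of a four-index tensor: the minimal `R` such that some tensor
of CP rank `R` approximates `T` within `ε` in the Frobenius norm. -/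
noncomputable def erank {ι₁ ι₂ ι₃ ι₄ : Type*} [Fintype ι₁] [Fintype ι₂] [Fintype ι₃] [Fintype ι₄]
    (ε : ℝ) (T : ι₁ → ι₂ → ι₃ → ι₄ → ℝ) : ℕ :=
  sInf {R : ℕ | ∃ A B C D, frob (T - cpTensor R A B C D) ≤ ε}

/-- The maximum absolute entry of a four-index tensor. -/
noncomputable def maxAbs {ι₁ ι₂ ι₃ ι₄ : Type*} [Fintype ι₁] [Fintype ι₂] [Fintype ι₃] [Fintype ι₄]
    [Nonempty ι₁] [Nonempty ι₂] [Nonempty ι₃] [Nonempty ι₄]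
    (T : ι₁ → ι₂ → ι₃ → ι₄ → ℝ) : ℝ :=
  Finset.univ.sup' Finset.univ_nonempty
    (fun i : ι₁ × ι₂ × ι₃ × ι₄ => |T i.1 i.2.1 i.2.2.1 i.2.2.2|)

/-!
With `*` and `/` acting entrywise, write `T₁ = (T₁ / T₂) * T₂` and approximate `X = T₁ / T₂`
and `Y = T₂` by CP tensors `X'`, `Y'` of ranks `rank_ε X` and `rank_ε Y`. The Hadamard product
`X' * Y'` is a CP tensor of rank `rank_ε X * rank_ε Y` whose factors are the column-wise
Khatri–Rao products of those of `X'` and `Y'`, and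
`X * Y - X' * Y' = X * (Y - Y') + Y * (X - X') - (X - X') * (Y - Y')` has Frobenius norm at most
`(max|X| + max|Y|) ε + ε²`. Hence `rank_η T₁ ≤ rank_ε X * rank_ε Y`.
-/

section
variable {ι₁ ι₂ ι₃ ι₄ : Type*}

def khatriRao {ι : Type*} {R₁ R₂ : ℕ} (A : ι → Fin R₁ → ℝ) (A' : ι → Fin R₂ → ℝ) :
    ι → Fin (R₁ * R₂) → ℝ :=
  fun i r => A i (finProdFinEquiv.symm r).1 * A' i (finProdFinEquiv.symm r).2

theorem cpTensor_mul_cpTensor {R₁ R₂ : ℕ}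
    (A : ι₁ → Fin R₁ → ℝ) (B : ι₂ → Fin R₁ → ℝ) (C : ι₃ → Fin R₁ → ℝ) (D : ι₄ → Fin R₁ → ℝ)
    (A' : ι₁ → Fin R₂ → ℝ) (B' : ι₂ → Fin R₂ → ℝ) (C' : ι₃ → Fin R₂ → ℝ)
    (D' : ι₄ → Fin R₂ → ℝ) :
    cpTensor R₁ A B C D * cpTensor R₂ A' B' C' D' =
      cpTensor (R₁ * R₂) (khatriRao A A') (khatriRao B B') (khatriRao C C') (khatriRao D D') := by
  funext μ ν σ lam
  simp only [Pi.mul_apply, cpTensor, khatriRao, Finset.sum_mul_sum, ← Fintype.sum_prod_type']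
  rw [← finProdFinEquiv.symm.sum_comp]
  exact Finset.sum_congr rfl fun _ _ => by ring

def flattenEuclidean : (ι₁ → ι₂ → ι₃ → ι₄ → ℝ) →ₗ[ℝ] EuclideanSpace ℝ (ι₁ × ι₂ × ι₃ × ι₄) where
  toFun T := WithLp.toLp 2 fun i => T i.1 i.2.1 i.2.2.1 i.2.2.2
  map_add' _ _ := rfl
  map_smul' _ _ := rfl

@[simp]
theorem flattenEuclidean_apply (T : ι₁ → ι₂ → ι₃ → ι₄ → ℝ) (i : ι₁ × ι₂ × ι₃ × ι₄) :
    flattenEuclidean T i = T i.1 i.2.1 i.2.2.1 i.2.2.2 :=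
  rfl

variable [Fintype ι₁] [Fintype ι₂] [Fintype ι₃] [Fintype ι₄]

theorem exists_cpTensor_eq (T : ι₁ → ι₂ → ι₃ → ι₄ → ℝ) :
    ∃ R A B C D, cpTensor R A B C D = T := by
  classical
  -- one rank-one term per index tuple `p`, with value `T p` at `p` and `0` elsewhere
  let e := (Fintype.equivFin (ι₁ × ι₂ × ι₃ × ι₄)).symm
  refine ⟨_, fun μ r => if (e r).1 = μ then 1 else 0, fun ν r => if (e r).2.1 = ν then 1 else 0,
    fun σ r => if (e r).2.2.1 = σ then 1 else 0,
    fun lam r => if (e r).2.2.2 = lam then T (e r).1 (e r).2.1 (e r).2.2.1 lam else 0, ?_⟩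
  funext μ ν σ lam
  rw [cpTensor, Fintype.sum_equiv e _ (fun p => if p = (μ, ν, σ, lam) then T μ ν σ lam else 0)]
  · simp
  · intro r
    obtain ⟨a, b, c, d⟩ := e r
    simp only [Prod.mk.injEq]
    split_ifs <;> simp_all

theorem frob_eq_norm_flattenEuclidean (T : ι₁ → ι₂ → ι₃ → ι₄ → ℝ) :
    frob T = ‖flattenEuclidean T‖ := by
  simp [EuclideanSpace.norm_eq, frob, Fintype.sum_prod_type]

theorem frob_nonneg (T : ι₁ → ι₂ → ι₃ → ι₄ → ℝ) : 0 ≤ frob T := Real.sqrt_nonneg _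

theorem frob_zero : frob (0 : ι₁ → ι₂ → ι₃ → ι₄ → ℝ) = 0 := by simp [frob]

theorem frob_add_le (T U : ι₁ → ι₂ → ι₃ → ι₄ → ℝ) : frob (T + U) ≤ frob T + frob U := by
  simpa only [frob_eq_norm_flattenEuclidean, map_add] using norm_add_le _ _

theorem frob_sub_le (T U : ι₁ → ι₂ → ι₃ → ι₄ → ℝ) : frob (T - U) ≤ frob T + frob U := by
  simpa only [frob_eq_norm_flattenEuclidean, map_sub] using norm_sub_le _ _

theorem frob_smul (c : ℝ) (T : ι₁ → ι₂ → ι₃ → ι₄ → ℝ) : frob (c • T) = |c| * frob T := by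
  simp only [frob_eq_norm_flattenEuclidean, map_smul, norm_smul, Real.norm_eq_abs]

theorem abs_le_frob (T : ι₁ → ι₂ → ι₃ → ι₄ → ℝ) (μ ν σ lam) : |T μ ν σ lam| ≤ frob T := by
  simpa [frob_eq_norm_flattenEuclidean] using
    PiLp.norm_apply_le (flattenEuclidean T) (μ, ν, σ, lam)

theorem frob_le_frob_of_abs_le {T U : ι₁ → ι₂ → ι₃ → ι₄ → ℝ}
    (h : ∀ μ ν σ lam, |T μ ν σ lam| ≤ |U μ ν σ lam|) : frob T ≤ frob U := by
  unfold frob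
  gcongr √(∑ μ, ∑ ν, ∑ σ, ∑ lam, ?_) with μ _ ν _ σ _ lam _
  exact sq_le_sq.mpr (h μ ν σ lam)

theorem frob_le_mul_frob_of_abs_le {T U : ι₁ → ι₂ → ι₃ → ι₄ → ℝ} {c : ℝ} (hc : 0 ≤ c)
    (h : ∀ μ ν σ lam, |T μ ν σ lam| ≤ c * |U μ ν σ lam|) : frob T ≤ c * frob U := by
  rw [← abs_of_nonneg hc, ← frob_smul]
  refine frob_le_frob_of_abs_le fun μ ν σ lam => ?_
  simpa [abs_mul, abs_of_nonneg hc] using h μ ν σ lam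

theorem frob_mul_le (T U : ι₁ → ι₂ → ι₃ → ι₄ → ℝ) : frob (T * U) ≤ frob T * frob U :=
  frob_le_mul_frob_of_abs_le (frob_nonneg T) fun μ ν σ lam => by
    simpa [abs_mul] using mul_le_mul_of_nonneg_right (abs_le_frob T μ ν σ lam) (abs_nonneg _)

theorem erank_le_of_frob_sub_le {T : ι₁ → ι₂ → ι₃ → ι₄ → ℝ} {ε : ℝ} {R : ℕ}
    {A : ι₁ → Fin R → ℝ} {B : ι₂ → Fin R → ℝ} {C : ι₃ → Fin R → ℝ} {D : ι₄ → Fin R → ℝ}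
    (h : frob (T - cpTensor R A B C D) ≤ ε) : erank ε T ≤ R :=
  Nat.sInf_le ⟨A, B, C, D, h⟩

theorem exists_frob_sub_cpTensor_erank_le (T : ι₁ → ι₂ → ι₃ → ι₄ → ℝ) {ε : ℝ} (hε : 0 ≤ ε) :
    ∃ A B C D, frob (T - cpTensor (erank ε T) A B C D) ≤ ε := by
  obtain ⟨R, A, B, C, D, hT⟩ := exists_cpTensor_eq T
  refine Nat.sInf_mem (s := {R | ∃ A B C D, frob (T - cpTensor R A B C D) ≤ ε})
    ⟨R, A, B, C, D, ?_⟩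
  rwa [hT, sub_self, frob_zero]

variable [Nonempty ι₁] [Nonempty ι₂] [Nonempty ι₃] [Nonempty ι₄]

theorem abs_le_maxAbs (T : ι₁ → ι₂ → ι₃ → ι₄ → ℝ) (μ ν σ lam) : |T μ ν σ lam| ≤ maxAbs T :=
  Finset.le_sup' (fun i : ι₁ × ι₂ × ι₃ × ι₄ => |T i.1 i.2.1 i.2.2.1 i.2.2.2|)
    (Finset.mem_univ (μ, ν, σ, lam))

theorem maxAbs_nonneg (T : ι₁ → ι₂ → ι₃ → ι₄ → ℝ) : 0 ≤ maxAbs T :=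
  (abs_nonneg _).trans (abs_le_maxAbs T (Classical.arbitrary ι₁) (Classical.arbitrary ι₂)
    (Classical.arbitrary ι₃) (Classical.arbitrary ι₄))

theorem frob_mul_le_maxAbs_mul (T U : ι₁ → ι₂ → ι₃ → ι₄ → ℝ) :
    frob (T * U) ≤ maxAbs T * frob U :=
  frob_le_mul_frob_of_abs_le (maxAbs_nonneg T) fun μ ν σ lam => by
    simpa [abs_mul] using mul_le_mul_of_nonneg_right (abs_le_maxAbs T μ ν σ lam) (abs_nonneg _)

theorem frob_mul_sub_mul_le (X Y X' Y' : ι₁ → ι₂ → ι₃ → ι₄ → ℝ) :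
    frob (X * Y - X' * Y') ≤
      maxAbs X * frob (Y - Y') + maxAbs Y * frob (X - X') + frob (X - X') * frob (Y - Y') := by
  have hsplit : X * Y - X' * Y' = X * (Y - Y') + Y * (X - X') - (X - X') * (Y - Y') := by ring
  calc frob (X * Y - X' * Y')
      ≤ frob (X * (Y - Y')) + frob (Y * (X - X')) + frob ((X - X') * (Y - Y')) := by
        rw [hsplit]
        linarith [frob_sub_le (X * (Y - Y') + Y * (X - X')) ((X - X') * (Y - Y')),
          frob_add_le (X * (Y - Y')) (Y * (X - X'))]
    _ ≤ _ := add_le_add (add_le_add (frob_mul_le_maxAbs_mul _ _) (frob_mul_le_maxAbs_mul _ _))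
        (frob_mul_le _ _)

theorem erank_mul_le (X Y : ι₁ → ι₂ → ι₃ → ι₄ → ℝ) {εX εY : ℝ} (hεX : 0 ≤ εX) (hεY : 0 ≤ εY) :
    erank (maxAbs X * εY + maxAbs Y * εX + εX * εY) (X * Y) ≤ erank εX X * erank εY Y := by
  obtain ⟨A, B, C, D, hX⟩ := exists_frob_sub_cpTensor_erank_le X hεX
  obtain ⟨A', B', C', D', hY⟩ := exists_frob_sub_cpTensor_erank_le Y hεY
  refine erank_le_of_frob_sub_le (A := khatriRao A A') (B := khatriRao B B')
    (C := khatriRao C C') (D := khatriRao D D') ?_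
  rw [← cpTensor_mul_cpTensor]
  refine (frob_mul_sub_mul_le _ _ _ _).trans ?_
  gcongr
  exacts [maxAbs_nonneg X, maxAbs_nonneg Y, frob_nonneg _]

end

/-- If `T₂` has no zero entries and `T₂⁻¹` is its elementwise inverse, then
`rank_ε(T₁ ⊙ T₂⁻¹) ≥ rank_η(T₁) / rank_ε(T₂)` with
`η = (max|T₁ ⊙ T₂⁻¹| + max|T₂|)·ε + ε²`. -/
theorem erank_hadamard_inv_ge {ι₁ ι₂ ι₃ ι₄ : Type*}
    [Fintype ι₁] [Fintype ι₂] [Fintype ι₃] [Fintype ι₄]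
    [Nonempty ι₁] [Nonempty ι₂] [Nonempty ι₃] [Nonempty ι₄]
    (T₁ T₂ : ι₁ → ι₂ → ι₃ → ι₄ → ℝ)
    (h₂ : ∀ μ ν σ lam, T₂ μ ν σ lam ≠ 0) (ε : ℝ) (hε : 0 ≤ ε) :
    (erank ((maxAbs (fun μ ν σ lam => T₁ μ ν σ lam / T₂ μ ν σ lam) + maxAbs T₂) * ε + ε ^ 2)
        T₁ : ℝ) / (erank ε T₂ : ℝ) ≤
      (erank ε (fun μ ν σ lam => T₁ μ ν σ lam / T₂ μ ν σ lam) : ℝ) := by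
  change (erank ((maxAbs (T₁ / T₂) + maxAbs T₂) * ε + ε ^ 2) T₁ : ℝ) / erank ε T₂ ≤
    erank ε (T₁ / T₂)
  have hT₁ : T₁ / T₂ * T₂ = T₁ := by
    funext μ ν σ lam
    exact div_mul_cancel₀ _ (h₂ μ ν σ lam)
  have hη : (maxAbs (T₁ / T₂) + maxAbs T₂) * ε + ε ^ 2 =
      maxAbs (T₁ / T₂) * ε + maxAbs T₂ * ε + ε * ε := by ring
  have hrank := erank_mul_le (T₁ / T₂) T₂ hε hε
  rw [hT₁, ← hη] at hrank
  exact div_le_of_le_mul₀ (Nat.cast_nonneg _) (Nat.cast_nonneg _) (by exact_mod_cast hrank)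
end

section
/- Let S_A and S_B be real symmetric positive semidefinite matrices, and let M = S_A ⊗ S_B be their Kronecker product. For 0 < ε < 1, if rank_{√ε}(S_A) = R_A and rank_{√ε}(S_B) = R_B (effective ranks in Frobenius norm), with R_A, R_B > 1, then rank_ε(M) ≥ R_A · R_B. -/
/-!
Diagonalise `S_A = U_A diag(a) U_Aᵀ` and `S_B = U_B diag(b) U_Bᵀ` with `U_A`, `U_B`
orthogonal; then `S_A ⊗ S_B = (U_A ⊗ U_B) diag(a_r b_s) (U_A ⊗ U_B)ᵀ`. By Eckart–Young, for
such a matrix the distance to the matrices of rank `< K` is governed by the tails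
`∑_{j ∉ T} (eigenvalue j)²` with `#T < K`. So every tail of `a²` over a set of size `< R_A`
exceeds `ε`, and likewise for `b²`. Given `T ⊆ m × n` with `#T < R_A R_B`, fewer than `R_A`
rows of `T` contain `R_B` or more entries; every other row `r` contributes more than `a_r² ε` to
the tail of `(a_r b_s)²`, and these rows carry more than `ε` of `a²`, so the tail exceeds `ε²`.
-/

/-- The Frobenius norm of a matrix. -/
noncomputable def frobM {m n : Type*} [Fintype m] [Fintype n] (A : Matrix m n ℝ) : ℝ :=
  Real.sqrt (∑ i, ∑ j, (A i j) ^ 2)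

/-- The ε-effective rank of a matrix: the minimal `K` such that some matrix of rank at most
`K` approximates `A` within `ε` in the Frobenius norm. -/
noncomputable def erankM {m n : Type*} [Fintype m] [Fintype n] (ε : ℝ) (A : Matrix m n ℝ) : ℕ :=
  sInf {K : ℕ | ∃ B : Matrix m n ℝ, B.rank ≤ K ∧ frobM (A - B) ≤ ε}

open Matrix

section Frobenius

variable {k m n : Type*} [Fintype k] [Fintype m] [Fintype n]

lemma frobM_nonneg (A : Matrix m n ℝ) : 0 ≤ frobM A := Real.sqrt_nonneg _

lemma frobM_sq (A : Matrix m n ℝ) : frobM A ^ 2 = ∑ i, ∑ j, A i j ^ 2 :=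
  Real.sq_sqrt <| Finset.sum_nonneg fun _ _ => Finset.sum_nonneg fun _ _ => sq_nonneg _

lemma frobM_sq_eq_trace (A : Matrix m n ℝ) : frobM A ^ 2 = trace (Aᵀ * A) := by
  simp only [frobM_sq, trace, diag, mul_apply, transpose_apply, ← sq]
  exact Finset.sum_comm

lemma frobM_transpose (A : Matrix m n ℝ) : frobM Aᵀ = frobM A := by
  rw [frobM, frobM, Finset.sum_comm]
  rfl

variable [DecidableEq m]

lemma frobM_mul_left_of_transpose_mul_self {U : Matrix k m ℝ} (hU : Uᵀ * U = 1)
    (A : Matrix m n ℝ) : frobM (U * A) = frobM A := by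
  rw [← sq_eq_sq₀ (frobM_nonneg _) (frobM_nonneg _), frobM_sq_eq_trace,
    frobM_sq_eq_trace, transpose_mul, Matrix.mul_assoc, ← Matrix.mul_assoc Uᵀ, hU,
    Matrix.one_mul]

lemma frobM_conj_of_transpose_mul_self {U : Matrix m m ℝ} (hU : Uᵀ * U = 1)
    (A : Matrix m m ℝ) : frobM (U * A * Uᵀ) = frobM A := by
  rw [Matrix.mul_assoc, frobM_mul_left_of_transpose_mul_self hU, ← frobM_transpose,
    transpose_mul, transpose_transpose, frobM_mul_left_of_transpose_mul_self hU,
    frobM_transpose]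

lemma frobM_sq_diagonal_mul (a : m → ℝ) (Z : Matrix m n ℝ) :
    frobM (diagonal a * Z) ^ 2 = ∑ i, a i ^ 2 * ∑ j, Z i j ^ 2 := by
  simp only [frobM_sq, diagonal_mul, mul_pow, Finset.mul_sum]

lemma frobM_sq_diagonal (a : m → ℝ) : frobM (diagonal a) ^ 2 = ∑ i, a i ^ 2 := by
  simp [frobM_sq, diagonal_apply, ite_pow]

end Frobenius

section Orthonormal

variable {k m d : Type*} [Fintype k] [Fintype m] [Fintype d] [DecidableEq d]

lemma frobM_mul_le_of_transpose_mul_self [DecidableEq m] {W : Matrix m d ℝ}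
    (hW : Wᵀ * W = 1) (X : Matrix k m ℝ) : frobM (X * W) ≤ frobM X := by
  set Q : Matrix m m ℝ := 1 - W * Wᵀ
  have hQt : Qᵀ = Q := by simp [Q, transpose_sub, transpose_mul]
  have hQQ : Q * Q = Q := by
    simp only [Q, sub_mul, mul_sub, Matrix.one_mul, Matrix.mul_one, Matrix.mul_assoc,
      ← Matrix.mul_assoc Wᵀ W, hW]
    abel
  have hsplit : frobM X ^ 2 = frobM (X * W) ^ 2 + frobM (X * Q) ^ 2 := by
    have hP : trace (Xᵀ * X * (W * Wᵀ)) = frobM (X * W) ^ 2 := by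
      rw [frobM_sq_eq_trace, ← Matrix.mul_assoc, trace_mul_comm, transpose_mul]
      simp only [Matrix.mul_assoc]
    have hQ : trace (Xᵀ * X * Q) = frobM (X * Q) ^ 2 := by
      calc trace (Xᵀ * X * Q) = trace ((Xᵀ * X * Q) * Q) := by rw [Matrix.mul_assoc _ Q, hQQ]
        _ = trace (Q * (Xᵀ * X * Q)) := trace_mul_comm _ _
        _ = frobM (X * Q) ^ 2 := by
          rw [frobM_sq_eq_trace, transpose_mul, hQt]
          simp only [Matrix.mul_assoc]
    rw [frobM_sq_eq_trace, ← hP, ← hQ, ← trace_add, ← Matrix.mul_add]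
    simp [Q]
  exact le_of_sq_le_sq (hsplit ▸ le_add_of_nonneg_right (sq_nonneg _)) (frobM_nonneg X)

lemma sum_sq_row_le_one_of_transpose_mul_self {Z : Matrix m d ℝ} (hZ : Zᵀ * Z = 1) (i : m) :
    ∑ j, Z i j ^ 2 ≤ 1 := by
  classical
  have h := frobM_mul_le_of_transpose_mul_self hZ (Matrix.of fun (_ : Unit) => Pi.single i 1)
  rw [← sq_le_sq₀ (frobM_nonneg _) (frobM_nonneg _), frobM_sq, frobM_sq] at h
  simpa [mul_apply, Pi.single_apply] using h

lemma frobM_sq_of_transpose_mul_self {Z : Matrix m d ℝ} (hZ : Zᵀ * Z = 1) :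
    frobM Z ^ 2 = Fintype.card d := by
  rw [frobM_sq_eq_trace, hZ, trace_one]

end Orthonormal

lemma Matrix.exists_orthonormal_cols_mul_eq_zero {k m : Type*} [Fintype k] [Fintype m]
    [DecidableEq m] (B : Matrix k m ℝ) :
    ∃ d, ∃ W : Matrix m (Fin d) ℝ, Wᵀ * W = 1 ∧ B * W = 0 ∧ Fintype.card m = B.rank + d := by
  let w := stdOrthonormalBasis ℝ (LinearMap.ker (toEuclideanLin B))
  refine ⟨_, of fun x i => (w i : EuclideanSpace ℝ m) x, ?_, ?_, ?_⟩
  · ext i i'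
    have := orthonormal_iff_ite.mp w.orthonormal i i'
    rw [Submodule.coe_inner, PiLp.inner_apply] at this
    rw [mul_apply, one_apply, ← this]
    simp only [transpose_apply, of_apply, RCLike.inner_apply, conj_trivial]
    exact Finset.sum_congr rfl fun _ _ => mul_comm _ _
  · ext x i
    have h := congrFun (congrArg WithLp.ofLp (w i).2) x
    simp only [toLpLin_apply, WithLp.ofLp_toLp, mulVec, dotProduct] at h
    simpa [mul_apply] using h
  · rw [rank_eq_finrank_range_toLin B (PiLp.basisFun 2 ℝ k) (PiLp.basisFun 2 ℝ m),
      ← toLpLin_eq_toLin, LinearMap.finrank_range_add_finrank_ker, finrank_euclideanSpace]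

/- Take `J` minimising `∑ j ∈ J, α j`. A threshold `t` between the values of `α` on `J` and
off `J` makes every term of `∑ j, (α j - t) * (c j - 1_J j)` nonnegative, and since
`∑ j, c j = #J` this sum is `∑ j, α j * c j - ∑ j ∈ J, α j`. -/
lemma exists_card_eq_sum_le_sum_mul {ι : Type*} [Fintype ι] [DecidableEq ι] {α c : ι → ℝ}
    (hα : 0 ≤ α) (hc0 : 0 ≤ c) (hc1 : c ≤ 1) {d : ℕ} (hsum : ∑ j, c j = d) :
    ∃ J : Finset ι, J.card = d ∧ ∑ j ∈ J, α j ≤ ∑ j, α j * c j := by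
  have hd : d ≤ Fintype.card ι := by
    exact_mod_cast show (d : ℝ) ≤ Fintype.card ι by
      simpa [hsum] using Finset.sum_le_sum fun j (_ : j ∈ Finset.univ) => hc1 j
  obtain ⟨J, hJ, hJmin⟩ := Finset.exists_min_image (Finset.univ.powersetCard d)
    (fun J => ∑ j ∈ J, α j) (Finset.powersetCard_nonempty.mpr (by simpa using hd))
  rw [Finset.mem_powersetCard_univ] at hJ
  have hswap : ∀ j ∈ J, ∀ j' ∉ J, α j ≤ α j' := by
    intro j hj j' hj'
    have hj'' : j' ∉ J.erase j := fun h => hj' (Finset.mem_of_mem_erase h)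
    have := hJmin (insert j' (J.erase j)) <| by
      rw [Finset.mem_powersetCard_univ, Finset.card_insert_of_notMem hj'',
        Finset.card_erase_of_mem hj, hJ]
      have : 0 < d := hJ ▸ Finset.card_pos.mpr ⟨j, hj⟩
      omega
    rw [Finset.sum_insert hj'', Finset.sum_erase_eq_sub hj] at this
    linarith
  obtain ⟨t, htJ, htJc⟩ : ∃ t, (∀ j ∈ J, α j ≤ t) ∧ ∀ j ∉ J, t ≤ α j := by
    rcases J.eq_empty_or_nonempty with rfl | hJne
    · exact ⟨0, by simp, fun j _ => hα j⟩
    · exact ⟨J.sup' hJne α, fun j hj => J.le_sup' α hj,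
        fun j' hj' => Finset.sup'_le _ _ fun j hj => hswap j hj j' hj'⟩
  have hterm : ∀ j, 0 ≤ (α j - t) * (c j - if j ∈ J then 1 else 0) := by
    intro j
    by_cases hj : j ∈ J
    · simp only [hj, if_true]
      exact mul_nonneg_of_nonpos_of_nonpos (by linarith [htJ j hj]) (sub_nonpos.mpr (hc1 j))
    · simp only [hj, if_false, sub_zero]
      exact mul_nonneg (by linarith [htJc j hj]) (hc0 j)
  have hexpand : ∑ j, (α j - t) * (c j - if j ∈ J then 1 else 0)
      = ∑ j, α j * c j - ∑ j ∈ J, α j := by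
    simp only [sub_mul, mul_sub, Finset.sum_sub_distrib, mul_ite, mul_one, mul_zero,
      Finset.sum_ite_mem, Finset.univ_inter, ← Finset.mul_sum, hsum, Finset.sum_const,
      nsmul_eq_mul, hJ]
    ring
  exact ⟨J, hJ, sub_nonneg.mp (hexpand ▸ Finset.sum_nonneg fun j _ => hterm j)⟩

section EckartYoung

variable {m : Type*} [Fintype m] [DecidableEq m] {U : Matrix m m ℝ}

lemma exists_rank_le_frobM_sq_sub_eq (hU : Uᵀ * U = 1) (a : m → ℝ) (T : Finset m) :
    ∃ B : Matrix m m ℝ, B.rank ≤ T.card ∧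
      frobM (U * diagonal a * Uᵀ - B) ^ 2 = ∑ j ∈ Tᶜ, a j ^ 2 := by
  refine ⟨U * diagonal (fun j => if j ∈ T then a j else 0) * Uᵀ, ?_, ?_⟩
  · calc _ ≤ (diagonal fun j => if j ∈ T then a j else 0).rank :=
          (rank_mul_le_left _ _).trans (rank_mul_le_right _ _)
      _ ≤ T.card := by
          rw [rank_diagonal, ← Fintype.card_coe T]
          exact Fintype.card_subtype_mono _ _ fun j hj => by_contra fun h => hj (if_neg h)
  · rw [← Matrix.sub_mul, ← Matrix.mul_sub, diagonal_sub, frobM_conj_of_transpose_mul_self hU,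
      frobM_sq_diagonal, ← Finset.sum_compl_add_sum T,
      Finset.sum_eq_zero (s := T) fun j hj => by simp [hj], add_zero]
    exact Finset.sum_congr rfl fun j hj => by simp [Finset.mem_compl.mp hj]

/- Restricting to an orthonormal basis `W` of the kernel of `B` does not increase the
Frobenius norm and kills `B`, leaving `∑ j, a j ^ 2 * c j` where `c j ∈ [0, 1]` are the squared
row norms of `Uᵀ * W` and sum to `dim ker B = card m - rank B`. -/
lemma exists_sum_compl_sq_le_frobM_sq_sub (hU : Uᵀ * U = 1) (a : m → ℝ) (B : Matrix m m ℝ) :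
    ∃ T : Finset m, T.card ≤ B.rank ∧
      ∑ j ∈ Tᶜ, a j ^ 2 ≤ frobM (U * diagonal a * Uᵀ - B) ^ 2 := by
  obtain ⟨d, W, hW, hBW, hcard⟩ := B.exists_orthonormal_cols_mul_eq_zero
  set Z := Uᵀ * W
  have hZ : Zᵀ * Z = 1 := by
    rw [transpose_mul, transpose_transpose, Matrix.mul_assoc, ← Matrix.mul_assoc U,
      mul_eq_one_comm.mp hU, Matrix.one_mul, hW]
  obtain ⟨J, hJ, hJle⟩ := exists_card_eq_sum_le_sum_mul (α := fun j => a j ^ 2)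
    (c := fun j => ∑ i, Z j i ^ 2) (fun j => sq_nonneg _)
    (fun j => Finset.sum_nonneg fun i _ => sq_nonneg _)
    (sum_sq_row_le_one_of_transpose_mul_self hZ)
    (by rw [← frobM_sq, frobM_sq_of_transpose_mul_self hZ, Fintype.card_fin])
  refine ⟨Jᶜ, by rw [Finset.card_compl]; omega, ?_⟩
  calc ∑ j ∈ Jᶜᶜ, a j ^ 2 ≤ ∑ j, a j ^ 2 * ∑ i, Z j i ^ 2 := by rwa [compl_compl]
    _ = frobM ((U * diagonal a * Uᵀ - B) * W) ^ 2 := by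
      rw [Matrix.sub_mul, hBW, sub_zero, Matrix.mul_assoc, Matrix.mul_assoc,
        frobM_mul_left_of_transpose_mul_self hU, frobM_sq_diagonal_mul]
    _ ≤ frobM (U * diagonal a * Uᵀ - B) ^ 2 := by
      gcongr
      · exact frobM_nonneg _
      · exact frobM_mul_le_of_transpose_mul_self hW _

end EckartYoung

section EffectiveRank

variable {m n : Type*} [Fintype m] [Fintype n] {δ : ℝ}

lemma lt_frobM_sub_of_rank_lt_erankM {A B : Matrix m n ℝ} (h : B.rank < erankM δ A) :
    δ < frobM (A - B) := by
  by_contra! hle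
  exact h.not_ge (Nat.sInf_le ⟨B, le_rfl, hle⟩)

lemma le_erankM_of_forall_rank_lt (hδ : 0 ≤ δ) {A : Matrix m n ℝ} {K : ℕ}
    (h : ∀ B : Matrix m n ℝ, B.rank < K → δ < frobM (A - B)) : K ≤ erankM δ A := by
  obtain ⟨B, hB, hAB⟩ := Nat.sInf_mem
    (s := {K : ℕ | ∃ B : Matrix m n ℝ, B.rank ≤ K ∧ frobM (A - B) ≤ δ})
    ⟨_, A, le_rfl, by simpa [frobM] using hδ⟩
  by_contra! hK
  exact (h B (hB.trans_lt hK)).not_ge hAB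

lemma sq_lt_sum_compl_sq_of_card_lt_erankM [DecidableEq m] {U : Matrix m m ℝ}
    (hU : Uᵀ * U = 1) (a : m → ℝ) (hδ : 0 ≤ δ) {T : Finset m}
    (hT : T.card < erankM δ (U * diagonal a * Uᵀ)) : δ ^ 2 < ∑ j ∈ Tᶜ, a j ^ 2 := by
  obtain ⟨B, hB, hAB⟩ := exists_rank_le_frobM_sq_sub_eq hU a T
  rw [← hAB]
  exact pow_lt_pow_left₀ (lt_frobM_sub_of_rank_lt_erankM (hB.trans_lt hT)) hδ two_ne_zero

end EffectiveRank

lemma mul_lt_sum_compl_mul_of_card_lt_mul {m n : Type*} [Fintype m] [Fintype n]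
    [DecidableEq m] [DecidableEq n] {α : m → ℝ} {β : n → ℝ} (hα : 0 ≤ α) (hβ : 0 ≤ β)
    {a b : ℝ} (hb : 0 < b) {RA RB : ℕ}
    (hA : ∀ T : Finset m, T.card < RA → a < ∑ r ∈ Tᶜ, α r)
    (hB : ∀ T : Finset n, T.card < RB → b < ∑ s ∈ Tᶜ, β s)
    {T : Finset (m × n)} (hT : T.card < RA * RB) :
    a * b < ∑ p ∈ Tᶜ, α p.1 * β p.2 := by
  set row : m → Finset n := fun r => Finset.univ.filter fun s => (r, s) ∈ T
  set long := Finset.univ.filter fun r => RB ≤ (row r).card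
  have hrows : ∑ r, (row r).card = T.card := by
    simp only [row, Finset.card_filter]
    rw [← Fintype.sum_prod_type' (fun r s => if (r, s) ∈ T then 1 else 0), Finset.sum_boole]
    simp
  have hlong : long.card < RA := by
    refine Nat.lt_of_mul_lt_mul_right (a := RB) (lt_of_le_of_lt ?_ hT)
    calc long.card * RB = ∑ _r ∈ long, RB := by rw [Finset.sum_const, smul_eq_mul]
      _ ≤ ∑ r ∈ long, (row r).card := Finset.sum_le_sum fun r hr => (Finset.mem_filter.mp hr).2
      _ ≤ ∑ r, (row r).card := Finset.sum_le_sum_of_subset (Finset.subset_univ _)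
      _ = T.card := hrows
  have hsplit : ∑ p ∈ Tᶜ, α p.1 * β p.2 = ∑ r, α r * ∑ s ∈ (row r)ᶜ, β s := by
    simp only [row, Finset.compl_filter, Finset.sum_filter, Finset.mul_sum, mul_ite, mul_zero]
    rw [← Fintype.sum_prod_type' (fun r s => if (r, s) ∉ T then α r * β s else 0),
      ← Finset.sum_filter]
    simp [Finset.compl_eq_univ_sdiff, Finset.filter_not]
  calc a * b < (∑ r ∈ longᶜ, α r) * b := mul_lt_mul_of_pos_right (hA long hlong) hb
    _ = ∑ r ∈ longᶜ, α r * b := Finset.sum_mul _ _ _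
    _ ≤ ∑ r ∈ longᶜ, α r * ∑ s ∈ (row r)ᶜ, β s := by
      refine Finset.sum_le_sum fun r hr => mul_le_mul_of_nonneg_left (hB _ ?_).le (hα r)
      simpa [long] using hr
    _ ≤ ∑ r, α r * ∑ s ∈ (row r)ᶜ, β s :=
      Finset.sum_le_sum_of_subset_of_nonneg (Finset.subset_univ _) fun r _ _ =>
        mul_nonneg (hα r) (Finset.sum_nonneg fun s _ => hβ s)
    _ = ∑ p ∈ Tᶜ, α p.1 * β p.2 := hsplit.symm

lemma Matrix.IsHermitian.exists_orthogonal_diagonal {m : Type*} [Fintype m] [DecidableEq m]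
    {S : Matrix m m ℝ} (hS : S.IsHermitian) :
    ∃ (U : Matrix m m ℝ) (a : m → ℝ), Uᵀ * U = 1 ∧ S = U * diagonal a * Uᵀ := by
  refine ⟨hS.eigenvectorUnitary, hS.eigenvalues, ?_, ?_⟩
  · simpa [star_eq_conjTranspose, conjTranspose_eq_transpose_of_trivial] using
      (mem_unitaryGroup_iff').mp hS.eigenvectorUnitary.2
  · simpa [star_eq_conjTranspose, conjTranspose_eq_transpose_of_trivial] using
      hS.spectral_theorem

section Kronecker

open Kronecker

variable {m n : Type*} [Fintype m] [Fintype n] [DecidableEq m] [DecidableEq n]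

lemma Matrix.transpose_mul_self_kronecker {UA : Matrix m m ℝ} {UB : Matrix n n ℝ}
    (hUA : UAᵀ * UA = 1) (hUB : UBᵀ * UB = 1) : (UA ⊗ₖ UB)ᵀ * (UA ⊗ₖ UB) = 1 := by
  rw [← kroneckerMap_transpose, ← mul_kronecker_mul, hUA, hUB, one_kronecker_one]

lemma Matrix.conj_diagonal_kronecker_conj_diagonal (UA : Matrix m m ℝ) (UB : Matrix n n ℝ)
    (a : m → ℝ) (b : n → ℝ) :
    (UA * diagonal a * UAᵀ) ⊗ₖ (UB * diagonal b * UBᵀ) =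
      (UA ⊗ₖ UB) * diagonal (fun p => a p.1 * b p.2) * (UA ⊗ₖ UB)ᵀ := by
  rw [mul_kronecker_mul, mul_kronecker_mul, diagonal_kronecker_diagonal,
    kroneckerMap_transpose]

end Kronecker

open Kronecker in
theorem erankM_kronecker_ge_general {m n : Type*} [Fintype m] [Fintype n]
    (SA : Matrix m m ℝ) (SB : Matrix n n ℝ) (hSA : SA.PosSemidef) (hSB : SB.PosSemidef)
    (ε : ℝ) (hε0 : 0 < ε) (RA RB : ℕ)
    (hRA : erankM (Real.sqrt ε) SA = RA) (hRB : erankM (Real.sqrt ε) SB = RB) :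
    RA * RB ≤ erankM ε (SA ⊗ₖ SB) := by
  classical
  subst hRA hRB
  obtain ⟨UA, a, hUA, rfl⟩ := hSA.isHermitian.exists_orthogonal_diagonal
  obtain ⟨UB, b, hUB, rfl⟩ := hSB.isHermitian.exists_orthogonal_diagonal
  have hsqrt := Real.sq_sqrt hε0.le
  have htailA : ∀ T : Finset m, T.card < erankM (Real.sqrt ε) (UA * diagonal a * UAᵀ) →
      ε < ∑ r ∈ Tᶜ, a r ^ 2 := fun T hT =>
    hsqrt ▸ sq_lt_sum_compl_sq_of_card_lt_erankM hUA a (Real.sqrt_nonneg ε) hT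
  have htailB : ∀ T : Finset n, T.card < erankM (Real.sqrt ε) (UB * diagonal b * UBᵀ) →
      ε < ∑ s ∈ Tᶜ, b s ^ 2 := fun T hT =>
    hsqrt ▸ sq_lt_sum_compl_sq_of_card_lt_erankM hUB b (Real.sqrt_nonneg ε) hT
  rw [conj_diagonal_kronecker_conj_diagonal]
  refine le_erankM_of_forall_rank_lt hε0.le fun B hB => ?_
  obtain ⟨T, hT, hTB⟩ :=
    exists_sum_compl_sq_le_frobM_sq_sub (transpose_mul_self_kronecker hUA hUB) _ B
  have hprod := mul_lt_sum_compl_mul_of_card_lt_mul (fun _ => sq_nonneg _)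
    (fun _ => sq_nonneg _) hε0 htailA htailB (hT.trans_lt hB)
  simp only [← mul_pow] at hprod
  exact lt_of_pow_lt_pow_left₀ 2 (frobM_nonneg _) (by rw [sq]; exact hprod.trans_le hTB)

open Kronecker in
/-- For real symmetric PSD matrices `S_A`, `S_B` and `0 < ε < 1`, if
`rank_{√ε}(S_A) = R_A > 1` and `rank_{√ε}(S_B) = R_B > 1` (effective ranks in Frobenius norm),
then the Kronecker product satisfies `rank_ε(S_A ⊗ S_B) ≥ R_A · R_B`. -/
theorem erankM_kronecker_ge {m n : Type*} [Fintype m] [Fintype n] [DecidableEq m] [DecidableEq n]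
    (SA : Matrix m m ℝ) (SB : Matrix n n ℝ) (hSA : SA.PosSemidef) (hSB : SB.PosSemidef)
    (ε : ℝ) (hε0 : 0 < ε) (hε1 : ε < 1) (RA RB : ℕ)
    (hRA : erankM (Real.sqrt ε) SA = RA) (hRB : erankM (Real.sqrt ε) SB = RB)
    (hRA1 : 1 < RA) (hRB1 : 1 < RB) :
    RA * RB ≤ erankM ε (SA ⊗ₖ SB) :=
  erankM_kronecker_ge_general SA SB hSA hSB ε hε0 RA RB hRA hRB
end

section
/- Let S be an N × N real symmetric PSD matrix with unit diagonal (S_{μμ} = 1 for all μ) whose largest eigenvalue is at most K. Then for any 0 < ε < 1, the ε-effective rank of S satisfies rank_ε(S) ≥ (1 − ε²)·N/K². Consequently rank_ε(S) grows at least linearly in N when K is bounded independently of N. -/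
open Matrix WithLp

theorem Matrix.exists_isStarProjection_mul_eq_self_trace_eq_rank {𝕜 m n : Type*} [RCLike 𝕜]
    [Fintype m] [Fintype n] [DecidableEq n] (B : Matrix m n 𝕜) :
    ∃ p : Matrix n n 𝕜, IsStarProjection p ∧ B * p = B ∧ p.trace = B.rank := by
  set U := (LinearMap.ker (toEuclideanLin B))ᗮ with hU
  set p := (toEuclideanCLM (n := n) (𝕜 := 𝕜)).symm U.starProjection
  have hp : toEuclideanCLM (n := n) (𝕜 := 𝕜) p = U.starProjection :=
    StarAlgEquiv.apply_symm_apply _ _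
  refine ⟨p, isStarProjection_starProjection.map (toEuclideanCLM (n := n) (𝕜 := 𝕜)).symm, ?_, ?_⟩
  · refine ext_iff_mulVec.2 fun x => ?_
    have hker : toLp 2 x - U.starProjection (toLp 2 x) ∈ LinearMap.ker (toEuclideanLin B) := by
      simpa only [hU, Submodule.orthogonal_orthogonal] using
        Submodule.sub_starProjection_mem_orthogonal (K := U) (toLp 2 x)
    have hpx : p *ᵥ x = ofLp (U.starProjection (toLp 2 x)) := by
      rw [← hp]
      rfl
    rw [LinearMap.mem_ker, map_sub, sub_eq_zero] at hker
    rw [← mulVec_mulVec, hpx]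
    simpa using congrArg ofLp hker.symm
  · have htrace : p.trace = LinearMap.trace 𝕜 _
        (U.starProjection : EuclideanSpace 𝕜 n →ₗ[𝕜] EuclideanSpace 𝕜 n) := by
      rw [LinearMap.trace_eq_matrix_trace 𝕜 (EuclideanSpace.basisFun n 𝕜).toBasis]
      rfl
    have hrank : B.rank = Module.finrank 𝕜 (LinearMap.range (toEuclideanLin B)) := by
      rw [toEuclideanLin_eq_toLin_orthonormal, ← rank_eq_finrank_range_toLin]
    have hproj := LinearMap.IsIdempotentElem.isProj_range _
      (ContinuousLinearMap.IsIdempotentElem.toLinearMap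
        (isStarProjection_starProjection (U := U)).isIdempotentElem)
    rw [htrace, hproj.trace, Submodule.range_starProjection, hU, LinearMap.orthogonal_ker,
      LinearMap.finrank_range_adjoint, hrank]

namespace IsStarProjection

variable {m n : Type*} [Fintype n]

theorem mul_mul_conjTranspose {R : Type*} [Ring R] [StarRing R] {p : Matrix n n R}
    (hp : IsStarProjection p) (X : Matrix m n R) : X * p * (X * p)ᴴ = X * p * Xᴴ := by
  rw [conjTranspose_mul, ← star_eq_conjTranspose p, hp.isSelfAdjoint.star_eq,
    ← Matrix.mul_assoc, Matrix.mul_assoc X p p, hp.isIdempotentElem.eq]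

variable [Fintype m] [DecidableEq n]

theorem trace_mul_conjTranspose_self_eq_add {R : Type*} [Ring R] [StarRing R]
    {p : Matrix n n R} (hp : IsStarProjection p) (X : Matrix m n R) :
    (X * Xᴴ).trace =
      (X * p * (X * p)ᴴ).trace + (X * (1 - p) * (X * (1 - p))ᴴ).trace := by
  rw [hp.mul_mul_conjTranspose, hp.one_sub.mul_mul_conjTranspose, ← trace_add,
    ← Matrix.add_mul, ← Matrix.mul_add, add_sub_cancel, Matrix.mul_one]

theorem trace_mul_mul_conjTranspose_le {p : Matrix n n ℝ} (hp : IsStarProjection p)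
    (X : Matrix m n ℝ) : (X * p * (X * p)ᴴ).trace ≤ (X * Xᴴ).trace := by
  rw [hp.trace_mul_conjTranspose_self_eq_add X]
  exact le_add_of_nonneg_right (posSemidef_self_mul_conjTranspose _).trace_nonneg

theorem trace_mul_mul_conjTranspose_le_mul_trace {p : Matrix n n ℝ} (hp : IsStarProjection p)
    {A : Matrix m n ℝ} {c : ℝ} (hA : (c • 1 - Aᴴ * A).PosSemidef) :
    (A * p * (A * p)ᴴ).trace ≤ c * p.trace := by
  have hpH : pᴴ = p := hp.isSelfAdjoint
  have hconj : pᴴ * (c • 1 - Aᴴ * A) * p = c • p - (A * p)ᴴ * (A * p) := by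
    rw [hpH, conjTranspose_mul, hpH, Matrix.mul_sub, Matrix.sub_mul, Matrix.mul_smul,
      Matrix.mul_one, Matrix.smul_mul, hp.isIdempotentElem.eq]
    simp only [Matrix.mul_assoc]
  have h := (hA.conjTranspose_mul_mul_same p).trace_nonneg
  rw [hconj, trace_sub, trace_smul, smul_eq_mul, trace_mul_comm (A * p)ᴴ] at h
  linarith

end IsStarProjection

namespace Matrix

variable {m n : Type*} [Fintype m] [Fintype n]

theorem trace_mul_conjTranspose_self_eq_sum_sq (A : Matrix m n ℝ) :
    (A * Aᴴ).trace = ∑ i, ∑ j, A i j ^ 2 := by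
  simp [trace, mul_apply, sq]

theorem sum_sq_le_sum_sq_sub_add_mul_rank [DecidableEq n] {A : Matrix m n ℝ} {c : ℝ}
    (hA : (c • 1 - Aᴴ * A).PosSemidef) (B : Matrix m n ℝ) :
    ∑ i, ∑ j, A i j ^ 2 ≤ ∑ i, ∑ j, (A - B) i j ^ 2 + c * B.rank := by
  obtain ⟨p, hp, hBp, htrace⟩ := exists_isStarProjection_mul_eq_self_trace_eq_rank B
  have hAq : A * (1 - p) = (A - B) * (1 - p) := by
    rw [Matrix.sub_mul A, Matrix.mul_sub B, Matrix.mul_one, hBp, sub_self, sub_zero]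
  simp only [← trace_mul_conjTranspose_self_eq_sum_sq, ← htrace]
  calc (A * Aᴴ).trace
      = (A * (1 - p) * (A * (1 - p))ᴴ).trace + (A * p * (A * p)ᴴ).trace :=
        (hp.trace_mul_conjTranspose_self_eq_add A).trans (add_comm _ _)
    _ ≤ ((A - B) * (A - B)ᴴ).trace + c * p.trace := by
        rw [hAq]
        exact add_le_add (hp.one_sub.trace_mul_mul_conjTranspose_le _)
          (hp.trace_mul_mul_conjTranspose_le_mul_trace hA)

theorem sum_sq_diag_le_sum_sq (A : Matrix n n ℝ) : ∑ i, A i i ^ 2 ≤ ∑ i, ∑ j, A i j ^ 2 :=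
  Finset.sum_le_sum fun i _ =>
    Finset.single_le_sum (f := fun j => A i j ^ 2) (fun _ _ => sq_nonneg _) (Finset.mem_univ i)

open scoped MatrixOrder in
theorem PosSemidef.sq_smul_one_sub_conjTranspose_mul_self [DecidableEq n] {S : Matrix n n ℝ}
    (hS : S.PosSemidef) {K : ℝ} (hK : ∀ i, hS.1.eigenvalues i ≤ K) :
    (K ^ 2 • (1 : Matrix n n ℝ) - Sᴴ * S).PosSemidef := by
  have hsa : IsSelfAdjoint S := hS.1
  have hcfc : cfc (fun x : ℝ => K ^ 2 - x ^ 2) S = K ^ 2 • (1 : Matrix n n ℝ) - Sᴴ * S := by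
    rw [cfc_sub (fun _ => K ^ 2) (fun x => x ^ 2) S, cfc_const (K ^ 2) S, cfc_pow_id S 2,
      hS.1.eq, sq S, Algebra.algebraMap_eq_smul_one]
  rw [← hcfc, ← nonneg_iff_posSemidef]
  refine cfc_nonneg fun x hx => ?_
  rw [hS.1.spectrum_real_eq_range_eigenvalues] at hx
  obtain ⟨i, rfl⟩ := hx
  nlinarith [hK i, hS.eigenvalues_nonneg i]

end Matrix

theorem sum_sq_le_of_frobM_le {m n : Type*} [Fintype m] [Fintype n] {A : Matrix m n ℝ} {ε : ℝ}
    (h : frobM A ≤ ε) : ∑ i, ∑ j, A i j ^ 2 ≤ ε ^ 2 :=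
  (Real.sqrt_le_iff.1 h).2

theorem exists_rank_le_erankM {m n : Type*} [Fintype m] [Fintype n] {ε : ℝ} (hε : 0 ≤ ε)
    (A : Matrix m n ℝ) : ∃ B : Matrix m n ℝ, B.rank ≤ erankM ε A ∧ frobM (A - B) ≤ ε :=
  Nat.sInf_mem (s := {K : ℕ | ∃ B : Matrix m n ℝ, B.rank ≤ K ∧ frobM (A - B) ≤ ε})
    ⟨_, A, le_rfl, by simpa [frobM] using hε⟩

theorem erankM_ge_of_unit_diag_general {n : Type*} [Fintype n] [DecidableEq n]
    (S : Matrix n n ℝ) (hS : S.PosSemidef) (hdiag : ∀ i, S i i = 1)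
    (K : ℝ) (hK : ∀ i, hS.1.eigenvalues i ≤ K)
    (ε : ℝ) (hε0 : 0 < ε) :
    (1 - ε ^ 2) * (Fintype.card n : ℝ) / K ^ 2 ≤ (erankM ε S : ℝ) := by
  obtain ⟨B, hrank, hB⟩ := exists_rank_le_erankM hε0.le S
  have hcard : (Fintype.card n : ℝ) ≤ ∑ i, ∑ j, S i j ^ 2 := by
    simpa [hdiag] using S.sum_sq_diag_le_sum_sq
  have hbound : (Fintype.card n : ℝ) ≤ ε ^ 2 + K ^ 2 * erankM ε S := by
    have hsplit :=
      sum_sq_le_sum_sq_sub_add_mul_rank (hS.sq_smul_one_sub_conjTranspose_mul_self hK) B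
    have hrank' : K ^ 2 * B.rank ≤ K ^ 2 * erankM ε S := by gcongr
    linarith [sum_sq_le_of_frobM_le hB]
  have hcleared : (1 - ε ^ 2) * Fintype.card n ≤ erankM ε S * K ^ 2 := by
    rcases Nat.eq_zero_or_pos (Fintype.card n) with hN | hN
    · rw [hN, Nat.cast_zero, mul_zero]
      positivity
    have hN1 : (1 : ℝ) ≤ Fintype.card n := by exact_mod_cast hN
    nlinarith [mul_nonneg (sq_nonneg ε) (sub_nonneg.2 hN1)]
  exact div_le_of_le_mul₀ (sq_nonneg K) (Nat.cast_nonneg _) hcleared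

/-- Let `S` be an `N × N` real symmetric PSD matrix with unit diagonal whose
largest eigenvalue is at most `K`. Then for `0 < ε < 1`, `rank_ε(S) ≥ (1 − ε²)·N/K²`. -/
theorem erankM_ge_of_unit_diag {n : Type*} [Fintype n] [DecidableEq n]
    (S : Matrix n n ℝ) (hS : S.PosSemidef) (hdiag : ∀ i, S i i = 1)
    (K : ℝ) (hK : ∀ i, hS.1.eigenvalues i ≤ K)
    (ε : ℝ) (hε0 : 0 < ε) (hε1 : ε < 1) :
    (1 - ε ^ 2) * (Fintype.card n : ℝ) / K ^ 2 ≤ (erankM ε S : ℝ) :=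
  erankM_ge_of_unit_diag_general S hS hdiag K hK ε hε0
end

section
/- Let S be an N × N real symmetric matrix with S_{μμ} = 1 and |S_{μν}| ≤ C e^{−α R_{μν}²} for all μ ≠ ν, where R_{μν} ≥ 0, C > 0, α > 0. Suppose additionally there is d > 0 such that for every μ and every n ∈ ℕ, the number of indices ν with n ≤ R_{μν} < n+1 is at most d(3n² + 3n + 1). Then every eigenvalue of S is at most 1 + C·d·∑_{n=0}^∞ e^{−αn²}(3n² + 3n + 1), a finite bound independent of N. -/
/-!
By Gershgorin, each eigenvalue lies within `∑_{ν ≠ μ} |S μ ν|` of the diagonal entry `1` of some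
row `μ`. Sorting the off-diagonal entries of that row into the shells `⌊R μ ν⌋₊ = k`, shell `k`
holds at most `d (3k² + 3k + 1)` entries, each at most `C e^{-α k²}`; the resulting series
converges by comparison with `∑ k^m e^{-α k}`.
-/

open Finset Real

theorem Matrix.IsHermitian.exists_eigenvalues_le_add_sum_abs {n : Type*} [Fintype n]
    [DecidableEq n] {S : Matrix n n ℝ} (hS : S.IsHermitian) (i : n) :
    ∃ μ, hS.eigenvalues i ≤ S μ μ + ∑ ν ∈ univ.erase μ, |S μ ν| := by
  have hev : Module.End.HasEigenvalue (Matrix.toLin' S) (hS.eigenvalues i) :=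
    Module.End.hasEigenvalue_iff_mem_spectrum.mpr <| by
      rw [Matrix.spectrum_toLin']
      exact hS.eigenvalues_mem_spectrum_real i
  obtain ⟨μ, hμ⟩ := eigenvalue_mem_ball hev
  rw [Metric.mem_closedBall, Real.dist_eq] at hμ
  exact ⟨μ, by simpa only [Real.norm_eq_abs, sub_le_iff_le_add'] using (abs_le.mp hμ).2⟩

theorem summable_pow_mul_exp_neg_mul_sq (m : ℕ) {α : ℝ} (hα : 0 < α) :
    Summable fun k : ℕ => (k : ℝ) ^ m * exp (-α * (k : ℝ) ^ 2) := by
  refine (summable_pow_mul_exp_neg_nat_mul m hα).of_nonneg_of_le (fun k => by positivity)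
    fun k => ?_
  have hk : (k : ℝ) ≤ (k : ℝ) ^ 2 := by exact_mod_cast Nat.le_self_pow two_ne_zero k
  exact mul_le_mul_of_nonneg_left
    (exp_le_exp.mpr (mul_le_mul_of_nonpos_left hk (neg_nonpos.mpr hα.le))) (by positivity)

theorem summable_exp_neg_mul_sq_mul_shell {α : ℝ} (hα : 0 < α) :
    Summable fun k : ℕ => exp (-α * (k : ℝ) ^ 2) * (3 * (k : ℝ) ^ 2 + 3 * k + 1) := by
  have h := (((summable_pow_mul_exp_neg_mul_sq 2 hα).mul_left 3).add
    ((summable_pow_mul_exp_neg_mul_sq 1 hα).mul_left 3)).add (summable_pow_mul_exp_neg_mul_sq 0 hα)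
  exact h.congr fun k => by ring

theorem exp_neg_mul_sq_le_exp_neg_mul_floor_sq {α x : ℝ} (hα : 0 ≤ α) (hx : 0 ≤ x) :
    exp (-α * x ^ 2) ≤ exp (-α * (⌊x⌋₊ : ℝ) ^ 2) := by
  have hfloor : (⌊x⌋₊ : ℝ) ^ 2 ≤ x ^ 2 := by gcongr; exact Nat.floor_le hx
  exact exp_le_exp.mpr (mul_le_mul_of_nonpos_left hfloor (neg_nonpos.mpr hα))

theorem card_filter_floor_eq_le_natCard {ι : Type*} [Fintype ι] (s : Finset ι) {R : ι → ℝ}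
    (hR : ∀ ν, 0 ≤ R ν) (k : ℕ) :
    #{ν ∈ s | ⌊R ν⌋₊ = k} ≤ Nat.card {ν : ι // (k : ℝ) ≤ R ν ∧ R ν < (k : ℝ) + 1} := by
  classical
  rw [Nat.card_eq_fintype_card, Fintype.card_subtype]
  refine card_le_card fun ν hν => ?_
  rw [mem_filter] at hν ⊢
  exact ⟨mem_univ ν, (Nat.floor_eq_iff (hR ν)).mp hν.2⟩

theorem sum_comp_floor_le_tsum {ι : Type*} (s : Finset ι) (R : ι → ℝ) {w b : ℕ → ℝ}
    (hw : ∀ k, 0 ≤ w k) (hcard : ∀ k, (#{ν ∈ s | ⌊R ν⌋₊ = k} : ℝ) ≤ b k)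
    (hsum : Summable fun k => w k * b k) :
    ∑ ν ∈ s, w ⌊R ν⌋₊ ≤ ∑' k, w k * b k := by
  have hterm : ∀ k, (#{ν ∈ s | ⌊R ν⌋₊ = k} : ℝ) * w k ≤ w k * b k := fun k => by
    rw [mul_comm]
    exact mul_le_mul_of_nonneg_left (hcard k) (hw k)
  calc ∑ ν ∈ s, w ⌊R ν⌋₊
      = ∑ k ∈ s.image (fun ν => ⌊R ν⌋₊), (#{ν ∈ s | ⌊R ν⌋₊ = k} : ℝ) * w k := by
        simp only [sum_comp, nsmul_eq_mul]
    _ ≤ ∑ k ∈ s.image (fun ν => ⌊R ν⌋₊), w k * b k := sum_le_sum fun k _ => hterm k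
    _ ≤ ∑' k, w k * b k :=
        hsum.sum_le_tsum _ fun k _ => (mul_nonneg (Nat.cast_nonneg _) (hw k)).trans (hterm k)

theorem eigenvalue_bound_gershgorin_general {n : Type*} [Fintype n] [DecidableEq n]
    (S : Matrix n n ℝ) (hS : S.IsHermitian) (hdiag : ∀ μ, S μ μ = 1)
    (Rd : n → n → ℝ) (hRd : ∀ μ ν, 0 ≤ Rd μ ν)
    (C α d : ℝ) (hC : 0 < C) (hα : 0 < α)
    (hbound : ∀ μ ν, μ ≠ ν → |S μ ν| ≤ C * Real.exp (-α * (Rd μ ν) ^ 2))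
    (hcount : ∀ μ (k : ℕ),
      (Nat.card {ν : n // (k : ℝ) ≤ Rd μ ν ∧ Rd μ ν < (k : ℝ) + 1} : ℝ) ≤
        d * (3 * (k : ℝ) ^ 2 + 3 * k + 1)) :
    ∀ i, hS.eigenvalues i ≤
      1 + C * d * ∑' k : ℕ, Real.exp (-α * (k : ℝ) ^ 2) * (3 * (k : ℝ) ^ 2 + 3 * k + 1) := by
  intro i
  obtain ⟨μ, hμ⟩ := hS.exists_eigenvalues_le_add_sum_abs i
  have hoff : ∑ ν ∈ univ.erase μ, |S μ ν| ≤
      ∑ ν ∈ univ.erase μ, C * exp (-α * (⌊Rd μ ν⌋₊ : ℝ) ^ 2) :=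
    sum_le_sum fun ν hν => (hbound μ ν (ne_comm.mp (ne_of_mem_erase hν))).trans <|
      mul_le_mul_of_nonneg_left (exp_neg_mul_sq_le_exp_neg_mul_floor_sq hα.le (hRd μ ν)) hC.le
  have hweights : (fun k : ℕ => C * exp (-α * (k : ℝ) ^ 2) * (d * (3 * (k : ℝ) ^ 2 + 3 * k + 1)))
      = fun k : ℕ => C * d * (exp (-α * (k : ℝ) ^ 2) * (3 * (k : ℝ) ^ 2 + 3 * k + 1)) := by
    funext k; ring
  have hshells := sum_comp_floor_le_tsum (univ.erase μ) (Rd μ) (fun k => by positivity)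
    (fun k => (Nat.cast_le.mpr (card_filter_floor_eq_le_natCard _ (hRd μ) k)).trans (hcount μ k))
    (hweights ▸ (summable_exp_neg_mul_sq_mul_shell hα).mul_left (C * d))
  rw [hweights, tsum_mul_left] at hshells
  rw [hdiag] at hμ
  linarith

/-- Let `S` be a real symmetric matrix with unit diagonal, off-diagonal
entries bounded by `C·e^{−α R_{μν}²}`, such that for every `μ` the number of `ν` with
`R_{μν}` in the shell `[k, k+1)` is at most `d(3k² + 3k + 1)`. Then every eigenvalue of `S` is
at most `1 + C·d·∑_{k=0}^∞ e^{−αk²}(3k² + 3k + 1)`. -/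
theorem eigenvalue_bound_gershgorin {n : Type*} [Fintype n] [DecidableEq n]
    (S : Matrix n n ℝ) (hS : S.IsHermitian) (hdiag : ∀ μ, S μ μ = 1)
    (Rd : n → n → ℝ) (hRd : ∀ μ ν, 0 ≤ Rd μ ν)
    (C α d : ℝ) (hC : 0 < C) (hα : 0 < α) (hd : 0 < d)
    (hbound : ∀ μ ν, μ ≠ ν → |S μ ν| ≤ C * Real.exp (-α * (Rd μ ν) ^ 2))
    (hcount : ∀ μ (k : ℕ),
      (Nat.card {ν : n // (k : ℝ) ≤ Rd μ ν ∧ Rd μ ν < (k : ℝ) + 1} : ℝ) ≤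
        d * (3 * (k : ℝ) ^ 2 + 3 * k + 1)) :
    ∀ i, hS.eigenvalues i ≤
      1 + C * d * ∑' k : ℕ, Real.exp (-α * (k : ℝ) ^ 2) * (3 * (k : ℝ) ^ 2 + 3 * k + 1) :=
  eigenvalue_bound_gershgorin_general S hS hdiag Rd hRd C α d hC hα hbound hcount
end
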